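/- arXiv:1307.5252 — 6 statements merged into one kernel-verified Lean document; each statement's English description precedes it below -/
import Mathlib

section
/- Let E be a directed graph and H_1, H_2 nonempty hereditary subsets of E^0. Then the intersection of the saturated closures of H_1 and H_2 equals the saturated closure of H_1 ∩ H_2, i.e., \overline{H_1} ∩ \overline{H_2} = \overline{H_1 ∩ H_2}. -/
/-- A directed graph. -/
structure DGraph (V E : Type) where
  s : E → V
  r : E → V

namespace DGraph

variable {V E : Type}

/-- Paths in a directed graph. -/
inductive GPath (G : DGraph V E) : V → V → Type
  | nil (v : V) : GPath G v v
  | cons (e : E) {w : V} (p : GPath G (G.r e) w) : GPath G (G.s e) w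

namespace GPath

variable {G : DGraph V E}

/-- The length of a path. -/
def length : ∀ {u v : V}, GPath G u v → ℕ
  | _, _, .nil _ => 0
  | _, _, .cons _ p => p.length + 1

/-- The list of edges of a path. -/
def edges : ∀ {u v : V}, GPath G u v → List E
  | _, _, .nil _ => []
  | _, _, .cons e p => e :: p.edges

/-- The list of vertices of a path. -/
def vertices : ∀ {u v : V}, GPath G u v → List V
  | _, _, .nil w => [w]
  | _, _, .cons e p => G.s e :: p.vertices

end GPath

variable (G : DGraph V E)

/-- `u` connects to `v` (there is a path from `u` to `v`). -/
def Reach (u v : V) : Prop := Nonempty (G.GPath u v)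

/-- A subset of vertices is hereditary if it is closed under ranges of paths
starting in it. -/
def Hereditary (H : Set V) : Prop := ∀ ⦃u v : V⦄, G.Reach u v → u ∈ H → v ∈ H

/-- A regular vertex: it emits a finite nonzero number of edges. -/
def Regular (v : V) : Prop := {e : E | G.s e = v}.Finite ∧ ∃ e : E, G.s e = v

/-- The tower `Λ_m(H)` building the saturated closure: `Λ_0(H) = H` and
`Λ_{m+1}(H) = Λ_m(H) ∪ {v regular | r(s⁻¹(v)) ⊆ Λ_m(H)}`. -/
def Lam (H : Set V) : ℕ → Set V
  | 0 => H
  | m + 1 => Lam H m ∪ {v : V | G.Regular v ∧ ∀ e : E, G.s e = v → G.r e ∈ Lam H m}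

/-- The saturated closure of `H`: the union of the `Λ_m(H)`. -/
def satClosure (H : Set V) : Set V := ⋃ m : ℕ, G.Lam H m

/-- The tree of a set of vertices: all vertices reachable from it. -/
def Tree (X : Set V) : Set V := {w : V | ∃ v ∈ X, G.Reach v w}

/-- A set of vertices is saturated. -/
def Saturated (H : Set V) : Prop :=
  ∀ v : V, G.Regular v → (∀ e : E, G.s e = v → G.r e ∈ H) → v ∈ H

/-- A cycle based at `v`: a nontrivial closed path whose edges have pairwise
distinct sources. -/
def IsCycle {v : V} (p : G.GPath v v) : Prop :=
  0 < p.length ∧ (p.edges.map G.s).Nodup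

/-- An exit for a path: an edge starting at one of its vertices but not
belonging to the path. -/
def HasExit {u v : V} (p : G.GPath u v) : Prop :=
  ∃ e : E, G.s e ∈ p.edges.map G.s ∧ e ∉ p.edges

/-- An extreme cycle: a cycle with an exit such that every vertex reachable from
the cycle connects back to the cycle. -/
def IsExtreme {v : V} (p : G.GPath v v) : Prop :=
  G.IsCycle p ∧ G.HasExit p ∧
    ∀ w ∈ p.vertices, ∀ x : V, G.Reach w x → ∃ y ∈ p.vertices, G.Reach x y

/-- There is a bifurcation at `w`. -/
def Bifurcation (w : V) : Prop := ∃ e f : E, e ≠ f ∧ G.s e = w ∧ G.s f = w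

/-- `w` lies on a cycle. -/
def OnCycle (w : V) : Prop := ∃ p : G.GPath w w, G.IsCycle p

/-- A line point: no bifurcations and no cycles in its tree. -/
def IsLinePoint (v : V) : Prop :=
  ∀ w : V, G.Reach v w → ¬G.Bifurcation w ∧ ¬G.OnCycle w

/-- The set of line points `P_l`. -/
def Pl : Set V := {v : V | G.IsLinePoint v}

/-- The set `P_c` of vertices lying on cycles without exits. -/
def Pc : Set V :=
  {v : V | ∃ (u : V) (p : G.GPath u u), G.IsCycle p ∧ ¬G.HasExit p ∧ v ∈ p.vertices}

/-- The set `P_ec` of vertices lying on extreme cycles. -/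
def Pec : Set V :=
  {v : V | ∃ (u : V) (p : G.GPath u u), G.IsExtreme p ∧ v ∈ p.vertices}

/-- The relation `∼¹`: `u ∼¹ v` iff `u = v`, or one reaches the other with no
bifurcations in their trees, or both are reachable from a common vertex on a
cycle. -/
def SimOne (u v : V) : Prop :=
  u = v ∨
    ((G.Reach u v ∨ G.Reach v u) ∧
      ∀ w : V, (G.Reach u w ∨ G.Reach v w) → ¬G.Bifurcation w) ∨
    ∃ w : V, G.OnCycle w ∧ G.Reach w u ∧ G.Reach w v

/-- The relation `∼`: the transitive closure of `∼¹`. -/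
def Sim : V → V → Prop := Relation.TransGen G.SimOne

/-- The equivalence class `[u]` of a vertex under `∼`. -/
def classOf (u : V) : Set V := {v : V | G.Sim u v}

/-- The set `F_E(H)` of paths entering `H` minimally: all vertices but the last
one lie outside `H`, and the last one lies in `H`. -/
structure FEnter (G : DGraph V E) (H : Set V) where
  src : V
  tgt : V
  path : G.GPath src tgt
  length_pos : 0 < path.length
  tgt_mem : tgt ∈ H
  not_mem : ∀ w ∈ path.vertices.dropLast, w ∉ H

/-- The quotient graph `_H E` associated to a hereditary set `H`. -/
def quotGraph (H : Set V) (hH : ∀ e : E, G.s e ∈ H → G.r e ∈ H) :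
    DGraph (H ⊕ G.FEnter H) ({e : E // G.s e ∈ H} ⊕ G.FEnter H) where
  s := fun x => match x with
    | .inl e => .inl ⟨G.s e.1, e.2⟩
    | .inr α => .inr α
  r := fun x => match x with
    | .inl e => .inl ⟨G.r e.1, hH e.1 e.2⟩
    | .inr α => .inl ⟨α.tgt, α.tgt_mem⟩

end DGraph

/-!
`satClosure H` is the least saturated set containing `H`. If `A` is closed under edges, then
`{v | v ∈ A → v ∈ satClosure (H ∩ A)}` is saturated and contains `H`, so
`satClosure H ∩ A ⊆ satClosure (H ∩ A)`. Apply this with `A = satClosure H₂`, which is closed under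
edges because `H₂` is, and then with `A = H₁`.
-/

namespace DGraph

variable {V E : Type} (G : DGraph V E)

lemma lam_mono (H : Set V) : Monotone (G.Lam H) :=
  monotone_nat_of_le_succ fun _ _ hv => Or.inl hv

lemma lam_subset_lam {H K : Set V} (hHK : H ⊆ K) : ∀ m, G.Lam H m ⊆ G.Lam K m
  | 0 => hHK
  | m + 1 => Set.union_subset_union (lam_subset_lam hHK m)
      fun _ ⟨hreg, hr⟩ => ⟨hreg, fun e he => lam_subset_lam hHK m (hr e he)⟩

lemma subset_satClosure (H : Set V) : H ⊆ G.satClosure H :=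
  Set.subset_iUnion (G.Lam H) 0

lemma satClosure_mono : Monotone G.satClosure :=
  fun _ _ hHK => Set.iUnion_mono (G.lam_subset_lam hHK)

lemma saturated_satClosure (H : Set V) : G.Saturated (G.satClosure H) := by
  intro v hreg hr
  have hlevel : ∀ e, ∃ m, G.s e = v → G.r e ∈ G.Lam H m := by
    intro e
    by_cases he : G.s e = v
    · obtain ⟨m, hm⟩ := Set.mem_iUnion.mp (hr e he)
      exact ⟨m, fun _ => hm⟩
    · exact ⟨0, fun h => absurd h he⟩
  choose level hlevel using hlevel
  obtain ⟨M, hM⟩ := (hreg.1.image level).exists_le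
  refine Set.mem_iUnion.mpr ⟨M + 1, Or.inr ⟨hreg, fun e he => ?_⟩⟩
  exact G.lam_mono H (hM _ ⟨e, he, rfl⟩) (hlevel e he)

lemma satClosure_subset {H T : Set V} (hT : G.Saturated T) (hHT : H ⊆ T) :
    G.satClosure H ⊆ T := by
  suffices hlam : ∀ m, G.Lam H m ⊆ T from Set.iUnion_subset hlam
  intro m
  induction m with
  | zero => exact hHT
  | succ m ih => exact Set.union_subset ih fun v ⟨hreg, hr⟩ => hT v hreg fun e he => ih (hr e he)

lemma satClosure_satClosure (H : Set V) : G.satClosure (G.satClosure H) = G.satClosure H :=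
  (G.satClosure_subset (G.saturated_satClosure H) subset_rfl).antisymm
    (G.subset_satClosure _)

lemma Hereditary.r_mem {G : DGraph V E} {H : Set V} (hH : G.Hereditary H) {e : E}
    (he : G.s e ∈ H) : G.r e ∈ H :=
  hH ⟨.cons e (.nil _)⟩ he

lemma r_mem_satClosure {H : Set V} (hH : ∀ e, G.s e ∈ H → G.r e ∈ H) {e : E}
    (he : G.s e ∈ G.satClosure H) : G.r e ∈ G.satClosure H := by
  let T : Set V := {v | v ∈ G.satClosure H ∧ ∀ e, G.s e = v → G.r e ∈ G.satClosure H}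
  have hT : G.Saturated T := fun v hreg hr =>
    ⟨G.saturated_satClosure H v hreg fun e he => (hr e he).1, fun e he => (hr e he).1⟩
  have hHT : H ⊆ T := fun v hv =>
    ⟨G.subset_satClosure H hv, fun e he => G.subset_satClosure H (hH e (he ▸ hv))⟩
  exact (G.satClosure_subset hT hHT he).2 e rfl

lemma satClosure_inter_subset {H A : Set V} (hA : ∀ e, G.s e ∈ A → G.r e ∈ A) :
    G.satClosure H ∩ A ⊆ G.satClosure (H ∩ A) := by
  let T : Set V := {v | v ∈ A → v ∈ G.satClosure (H ∩ A)}
  have hT : G.Saturated T := fun v hreg hr hv =>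
    G.saturated_satClosure _ v hreg fun e he => hr e he (hA e (he ▸ hv))
  have hHT : H ⊆ T := fun v hvH hvA => G.subset_satClosure _ ⟨hvH, hvA⟩
  exact fun v ⟨hv, hvA⟩ => G.satClosure_subset hT hHT hv hvA

end DGraph

theorem satClosure_inter_general {V E : Type} (G : DGraph V E) (H₁ H₂ : Set V)
    (h₁ : G.Hereditary H₁) (h₂ : G.Hereditary H₂) :
    G.satClosure H₁ ∩ G.satClosure H₂ = G.satClosure (H₁ ∩ H₂) := by
  refine subset_antisymm ?_
    (Set.subset_inter (G.satClosure_mono Set.inter_subset_left)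
      (G.satClosure_mono Set.inter_subset_right))
  have hH₁ : G.satClosure H₂ ∩ H₁ ⊆ G.satClosure (H₁ ∩ H₂) := by
    simpa only [Set.inter_comm H₂] using G.satClosure_inter_subset (H := H₂) fun _ => h₁.r_mem
  calc G.satClosure H₁ ∩ G.satClosure H₂
      ⊆ G.satClosure (H₁ ∩ G.satClosure H₂) :=
        G.satClosure_inter_subset fun _ => G.r_mem_satClosure fun _ => h₂.r_mem
    _ ⊆ G.satClosure (G.satClosure (H₁ ∩ H₂)) := by
        rw [Set.inter_comm]
        exact G.satClosure_mono hH₁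
    _ = G.satClosure (H₁ ∩ H₂) := G.satClosure_satClosure _

/-- for nonempty hereditary sets,
`\overline{H₁} ∩ \overline{H₂} = \overline{H₁ ∩ H₂}`. -/
theorem satClosure_inter {V E : Type} (G : DGraph V E) (H₁ H₂ : Set V)
    (h₁ : G.Hereditary H₁) (h₂ : G.Hereditary H₂)
    (hn₁ : H₁.Nonempty) (hn₂ : H₂.Nonempty) :
    G.satClosure H₁ ∩ G.satClosure H₂ = G.satClosure (H₁ ∩ H₂) :=
  satClosure_inter_general G H₁ H₂ h₁ h₂
end

section
/- Let E be a directed graph and H_1, H_2 nonempty hereditary subsets with saturated closures defined via the Λ_m construction. For every m ∈ ℕ, Λ_m(H_1) ∩ Λ_m(H_2) = Λ_m(H_1 ∩ H_2). -/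
namespace DGraph

variable {V E : Type} {G : DGraph V E}

theorem lam_mono_s2 {H H' : Set V} (h : H ⊆ H') : ∀ m, G.Lam H m ⊆ G.Lam H' m
  | 0 => h
  | m + 1 => fun _ hv =>
    hv.imp (lam_mono_s2 h m ·) fun ⟨hreg, hr⟩ => ⟨hreg, fun e he => lam_mono_s2 h m (hr e he)⟩

namespace Hereditary

variable {H : Set V}

theorem r_mem_s2 (hH : G.Hereditary H) {e : E} (he : G.s e ∈ H) : G.r e ∈ H :=
  hH ⟨.cons e (.nil _)⟩ he

theorem r_mem_lam (hH : G.Hereditary H) {e : E} :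
    ∀ m, G.s e ∈ G.Lam H m → G.r e ∈ G.Lam H m
  | 0, he => hH.r_mem_s2 he
  | m + 1, .inl he => .inl (hH.r_mem_lam m he)
  | _ + 1, .inr ⟨_, hr⟩ => .inl (hr e rfl)

theorem r_mem_lam_of_s_mem_lam_succ (hH : G.Hereditary H) {e : E} {m : ℕ}
    (he : G.s e ∈ G.Lam H (m + 1)) : G.r e ∈ G.Lam H m := by
  rcases he with he | ⟨-, hr⟩
  · exact hH.r_mem_lam m he
  · exact hr e rfl

end Hereditary

theorem lam_inter_subset {H₁ H₂ : Set V} (h₁ : G.Hereditary H₁) (h₂ : G.Hereditary H₂) :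
    ∀ m, G.Lam H₁ m ∩ G.Lam H₂ m ⊆ G.Lam (H₁ ∩ H₂) m
  | 0 => subset_rfl
  | m + 1 => by
    rintro v ⟨hv₁, hv₂⟩
    have ih := lam_inter_subset h₁ h₂ m
    -- whichever clause put `v` into `Λ_{m+1}(Hᵢ)`, its ranges lie in `Λ_m(Hᵢ)`
    have of_regular (hreg : G.Regular v) : v ∈ G.Lam (H₁ ∩ H₂) (m + 1) :=
      .inr ⟨hreg, fun e he => ih ⟨h₁.r_mem_lam_of_s_mem_lam_succ (he ▸ hv₁),
        h₂.r_mem_lam_of_s_mem_lam_succ (he ▸ hv₂)⟩⟩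
    rcases hv₁ with hm₁ | ⟨hreg, -⟩
    · rcases hv₂ with hm₂ | ⟨hreg, -⟩
      · exact .inl (ih ⟨hm₁, hm₂⟩)
      · exact of_regular hreg
    · exact of_regular hreg

end DGraph

theorem lam_inter_general {V E : Type} (G : DGraph V E) (H₁ H₂ : Set V)
    (h₁ : G.Hereditary H₁) (h₂ : G.Hereditary H₂) (m : ℕ) :
    G.Lam H₁ m ∩ G.Lam H₂ m = G.Lam (H₁ ∩ H₂) m :=
  (DGraph.lam_inter_subset h₁ h₂ m).antisymm <|
    Set.subset_inter (DGraph.lam_mono_s2 Set.inter_subset_left m)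
      (DGraph.lam_mono_s2 Set.inter_subset_right m)

/-- for nonempty hereditary sets and every `m`,
`Λ_m(H₁) ∩ Λ_m(H₂) = Λ_m(H₁ ∩ H₂)`. -/
theorem lam_inter {V E : Type} (G : DGraph V E) (H₁ H₂ : Set V)
    (h₁ : G.Hereditary H₁) (h₂ : G.Hereditary H₂)
    (hn₁ : H₁.Nonempty) (hn₂ : H₂.Nonempty) (m : ℕ) :
    G.Lam H₁ m ∩ G.Lam H₂ m = G.Lam (H₁ ∩ H₂) m :=
  lam_inter_general G H₁ H₂ h₁ h₂ m
end

section
/- Let E be a graph and H a hereditary subset of E^0. For every vertex v in the saturated closure \overline{H}, there exist finitely many paths α_1, …, α_n with source v and range in H such that v = Σ_{i=1}^n α_i α_i^* in the Leavitt path algebra L_K(E). -/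
/-- Generators of the Leavitt path algebra: vertices, edges and ghost edges. -/
inductive LGen (V E : Type) : Type
  | vert : V → LGen V E
  | edge : E → LGen V E
  | ghost : E → LGen V E

open FreeAlgebra in
/-- The defining relations of the Leavitt path algebra: (V), (E1), (E2), (CK1)
and (CK2). -/
inductive LRel (K : Type) [CommRing K] {V E : Type} (G : DGraph V E) :
    FreeAlgebra K (LGen V E) → FreeAlgebra K (LGen V E) → Prop
  | vert_same (v : V) :
      LRel K G (ι K (LGen.vert v) * ι K (LGen.vert v)) (ι K (LGen.vert v))
  | vert_diff (u v : V) (h : u ≠ v) :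
      LRel K G (ι K (LGen.vert u) * ι K (LGen.vert v)) 0
  | source_edge (e : E) :
      LRel K G (ι K (LGen.vert (G.s e)) * ι K (LGen.edge e)) (ι K (LGen.edge e))
  | edge_range (e : E) :
      LRel K G (ι K (LGen.edge e) * ι K (LGen.vert (G.r e))) (ι K (LGen.edge e))
  | range_ghost (e : E) :
      LRel K G (ι K (LGen.vert (G.r e)) * ι K (LGen.ghost e)) (ι K (LGen.ghost e))
  | ghost_source (e : E) :
      LRel K G (ι K (LGen.ghost e) * ι K (LGen.vert (G.s e))) (ι K (LGen.ghost e))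
  | ck1_same (e : E) :
      LRel K G (ι K (LGen.ghost e) * ι K (LGen.edge e)) (ι K (LGen.vert (G.r e)))
  | ck1_diff (e f : E) (h : e ≠ f) :
      LRel K G (ι K (LGen.ghost e) * ι K (LGen.edge f)) 0
  | ck2 (v : V) (hv : G.Regular v) (S : Finset E) (hS : ∀ e : E, e ∈ S ↔ G.s e = v) :
      LRel K G (ι K (LGen.vert v))
        (∑ e ∈ S, ι K (LGen.edge e) * ι K (LGen.ghost e))

/-- The Leavitt path algebra of the graph `G` over `K`. -/
abbrev LPA (K : Type) [CommRing K] {V E : Type} (G : DGraph V E) : Type :=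
  RingQuot (LRel K G)

namespace LPA

variable (K : Type) [CommRing K] {V E : Type} (G : DGraph V E)

/-- The image of a vertex in the Leavitt path algebra. -/
def vertElem (v : V) : LPA K G :=
  RingQuot.mkAlgHom K (LRel K G) (FreeAlgebra.ι K (LGen.vert v))

/-- The image of an edge in the Leavitt path algebra. -/
def edgeElem (e : E) : LPA K G :=
  RingQuot.mkAlgHom K (LRel K G) (FreeAlgebra.ι K (LGen.edge e))

/-- The image of a ghost edge in the Leavitt path algebra. -/
def ghostElem (e : E) : LPA K G :=
  RingQuot.mkAlgHom K (LRel K G) (FreeAlgebra.ι K (LGen.ghost e))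

/-- The monomial associated to a path. -/
def pathElem : ∀ {u v : V}, G.GPath u v → LPA K G
  | _, _, .nil w => vertElem K G w
  | _, _, .cons e p => edgeElem K G e * pathElem p

/-- The monomial `α^*` associated to a path `α`. -/
def pathStarElem : ∀ {u v : V}, G.GPath u v → LPA K G
  | _, _, .nil w => vertElem K G w
  | _, _, .cons e p => pathStarElem p * ghostElem K G e

/-- The two-sided ideal generated by a set of vertices. -/
def vertIdeal (X : Set V) : TwoSidedIdeal (LPA K G) :=
  TwoSidedIdeal.span (vertElem K G '' X)

/-- The homogeneous component of degree `n` of the Leavitt path algebra: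
the span of the monomials `α β^*` with `length α - length β = n`. -/
def homComp (n : ℤ) : Submodule K (LPA K G) :=
  Submodule.span K {x : LPA K G | ∃ (u u' w : V) (α : G.GPath u w) (β : G.GPath u' w),
    (α.length : ℤ) - (β.length : ℤ) = n ∧ x = pathElem K G α * pathStarElem K G β}

end LPA

/-!
Induction along the tower `Λ_m(H)`. A vertex of `H` is the trivial path times its ghost. A regular
vertex `v` all of whose edges land in `Λ_m(H)` satisfies `v = Σ_{s(e)=v} e r(e) e^*` by (CK2) and (E1);
expanding each `r(e) = Σ αα^*` gives `v = Σ (eα)(eα)^*`, a sum over paths from `v` into `H`.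
-/

namespace DGraph.GPath

variable {V E : Type} {G : DGraph V E}

def consOfEq {v w : V} (e : E) (he : G.s e = v) (p : G.GPath (G.r e) w) : G.GPath v w :=
  he ▸ .cons e p

end DGraph.GPath

namespace LPA

variable (K : Type) [CommRing K] {V E : Type} {G : DGraph V E}

theorem vertElem_mul_self (v : V) : vertElem K G v * vertElem K G v = vertElem K G v := by
  simp only [vertElem, ← map_mul]
  exact RingQuot.mkAlgHom_rel K (LRel.vert_same v)

theorem edgeElem_mul_vertElem (e : E) :
    edgeElem K G e * vertElem K G (G.r e) = edgeElem K G e := by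
  simp only [edgeElem, vertElem, ← map_mul]
  exact RingQuot.mkAlgHom_rel K (LRel.edge_range e)

theorem vertElem_eq_sum_of_regular {v : V} (hv : G.Regular v) :
    vertElem K G v = ∑ e ∈ hv.1.toFinset, edgeElem K G e * ghostElem K G e := by
  simpa only [vertElem, edgeElem, ghostElem, map_sum, map_mul] using
    RingQuot.mkAlgHom_rel K (LRel.ck2 (K := K) v hv hv.1.toFinset fun _ => hv.1.mem_toFinset)

theorem pathElem_consOfEq {v w : V} (e : E) (he : G.s e = v) (p : G.GPath (G.r e) w) :
    pathElem K G (.consOfEq e he p) = edgeElem K G e * pathElem K G p := by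
  subst he; rfl

theorem pathStarElem_consOfEq {v w : V} (e : E) (he : G.s e = v) (p : G.GPath (G.r e) w) :
    pathStarElem K G (.consOfEq e he p) = pathStarElem K G p * ghostElem K G e := by
  subst he; rfl

variable (G) in
def IsPathSum (H : Set V) (v : V) : Prop :=
  ∃ (ι : Type) (_ : Fintype ι) (w : ι → V) (α : ∀ i, G.GPath v (w i)),
    (∀ i, w i ∈ H) ∧ vertElem K G v = ∑ i, pathElem K G (α i) * pathStarElem K G (α i)

variable {K} {H : Set V}

theorem isPathSum_of_mem {v : V} (hv : v ∈ H) : IsPathSum K G H v :=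
  ⟨Unit, inferInstance, fun _ => v, fun _ => .nil v, fun _ => hv, by
    simp [pathElem, pathStarElem, vertElem_mul_self]⟩

theorem IsPathSum.of_regular {v : V} (hv : G.Regular v)
    (h : ∀ e, G.s e = v → IsPathSum K G H (G.r e)) : IsPathSum K G H v := by
  set S := hv.1.toFinset
  have hS : ∀ e ∈ S, G.s e = v := fun e he => hv.1.mem_toFinset.mp he
  choose ι hι w α hw hsum using fun e : S => h e (hS e e.2)
  refine ⟨Σ e : S, ι e, inferInstance, fun j => w j.1 j.2,
    fun j => .consOfEq j.1.1 (hS _ j.1.2) (α j.1 j.2), fun j => hw j.1 j.2, ?_⟩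
  calc vertElem K G v
      = ∑ e : S, edgeElem K G e * vertElem K G (G.r e) * ghostElem K G e := by
        simp only [edgeElem_mul_vertElem]
        exact vertElem_eq_sum_of_regular K hv |>.trans (Finset.sum_coe_sort S _).symm
    _ = ∑ e : S, ∑ i, edgeElem K G e * (pathElem K G (α e i) * pathStarElem K G (α e i)) *
          ghostElem K G e := by
        simp only [hsum, Finset.mul_sum, Finset.sum_mul]
    _ = _ := by
        rw [← Finset.univ_sigma_univ, Finset.sum_sigma]
        simp only [pathElem_consOfEq, pathStarElem_consOfEq, mul_assoc]

theorem isPathSum_of_mem_lam {v : V} {m : ℕ} (hv : v ∈ G.Lam H m) : IsPathSum K G H v := by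
  induction m generalizing v with
  | zero => exact isPathSum_of_mem hv
  | succ m ih =>
    rcases hv with hv | ⟨hreg, hr⟩
    · exact ih hv
    · exact .of_regular hreg fun e he => ih (hr e he)

theorem isPathSum_of_mem_satClosure {v : V} (hv : v ∈ G.satClosure H) : IsPathSum K G H v :=
  have ⟨_, hm⟩ := Set.mem_iUnion.mp hv
  isPathSum_of_mem_lam hm

theorem IsPathSum.exists_fin {v : V} (h : IsPathSum K G H v) :
    ∃ (n : ℕ) (w : Fin n → V) (α : ∀ i : Fin n, G.GPath v (w i)),
      (∀ i, w i ∈ H) ∧ vertElem K G v = ∑ i, pathElem K G (α i) * pathStarElem K G (α i) := by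
  obtain ⟨ι, _, w, α, hw, hsum⟩ := h
  let φ := (Fintype.equivFin ι).symm
  exact ⟨_, w ∘ φ, fun i => α (φ i), fun i => hw (φ i), hsum.trans (φ.sum_comp _).symm⟩

end LPA

theorem vertex_in_satClosure_sum_paths_general (K : Type) [Field K] {V E : Type}
    (G : DGraph V E) (H : Set V) (v : V)
    (hv : v ∈ G.satClosure H) :
    ∃ (n : ℕ) (w : Fin n → V) (α : ∀ i : Fin n, G.GPath v (w i)),
      (∀ i, w i ∈ H) ∧
      LPA.vertElem K G v = ∑ i, LPA.pathElem K G (α i) * LPA.pathStarElem K G (α i) := by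
  exact (LPA.isPathSum_of_mem_satClosure hv).exists_fin

/-- every vertex `v` of the saturated closure of a hereditary set
`H` can be written as `v = Σᵢ αᵢ αᵢ^*` for finitely many paths `αᵢ` with source
`v` and range in `H`. -/
theorem vertex_in_satClosure_sum_paths (K : Type) [Field K] {V E : Type}
    (G : DGraph V E) (H : Set V) (hH : G.Hereditary H) (v : V)
    (hv : v ∈ G.satClosure H) :
    ∃ (n : ℕ) (w : Fin n → V) (α : ∀ i : Fin n, G.GPath v (w i)),
      (∀ i, w i ∈ H) ∧
      LPA.vertElem K G v = ∑ i, LPA.pathElem K G (α i) * LPA.pathStarElem K G (α i) :=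
  vertex_in_satClosure_sum_paths_general K G H v hv
end

section
/- Let I be a (two-sided) ideal of an associative algebra A. If every element y of the center Z(I) of I can be written as a finite sum y = Σ_{i=1}^n a_i b_i with all a_i, b_i ∈ Z(I), then Z(I) = I ∩ Z(A). -/
/-! A product `a * b` of two elements of `Z(I)` is central in `A`: for any `c`, both `b * c` and
`c * a` lie in `I`, so `a` and `b` can each be moved across them,
`a b c = (b c) a = b (c a) = (c a) b`. Hence every sum of such products lies in `Z(A)`. -/

namespace TwoSidedIdeal

variable {A : Type*} [NonUnitalRing A] (I : TwoSidedIdeal A)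

theorem commute_mul_of_forall_commute_mem {a b : A} (ha : a ∈ I) (hb : b ∈ I)
    (ha_comm : ∀ z ∈ I, Commute a z) (hb_comm : ∀ z ∈ I, Commute b z) (c : A) :
    Commute (a * b) c :=
  calc a * b * c = a * (b * c) := mul_assoc _ _ _
    _ = b * c * a := ha_comm _ (I.mul_mem_right _ _ hb)
    _ = b * (c * a) := mul_assoc _ _ _
    _ = c * a * b := hb_comm _ (I.mul_mem_left _ _ ha)
    _ = c * (a * b) := mul_assoc _ _ _

end TwoSidedIdeal

/-- if every element of the center of a two-sided ideal `I` is a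
finite sum of products of two elements of `Z(I)`, then `Z(I) = I ∩ Z(A)`. -/
theorem center_ideal_eq_inter {A : Type*} [NonUnitalRing A] (I : TwoSidedIdeal A)
    (h : ∀ y : A, y ∈ I → (∀ z : A, z ∈ I → y * z = z * y) →
      ∃ (n : ℕ) (a b : Fin n → A),
        (∀ i, a i ∈ I ∧ ∀ z : A, z ∈ I → a i * z = z * a i) ∧
        (∀ i, b i ∈ I ∧ ∀ z : A, z ∈ I → b i * z = z * b i) ∧
        y = ∑ i, a i * b i) :
    {x : A | x ∈ I ∧ ∀ z : A, z ∈ I → x * z = z * x} =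
      {x : A | x ∈ I} ∩ {x : A | ∀ a : A, x * a = a * x} := by
  ext x
  constructor
  · rintro ⟨hxI, hxZ⟩
    obtain ⟨n, a, b, ha, hb, rfl⟩ := h x hxI hxZ
    exact ⟨hxI, fun c => Commute.sum_left _ _ c fun i _ =>
      I.commute_mul_of_forall_commute_mem (ha i).1 (hb i).1 (ha i).2 (hb i).2 c⟩
  · rintro ⟨hxI, hxZ⟩
    exact ⟨hxI, fun z _ => hxZ z⟩
end

section
/- Let E be a graph and {H_i}_{i∈Λ} a family of pairwise disjoint hereditary subsets of E^0. Then in the Leavitt path algebra L_K(E), the ideal generated by the union ∪_i H_i equals the (internal) direct sum of the ideals I(H_i): I(∪_{i∈Λ} H_i) = ⊕_{i∈Λ} I(H_i). -/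
namespace LPAAux

open DGraph LPA

variable (K : Type) [CommRing K] {V E : Type} (G : DGraph V E)

local notation "⟦" x "⟧" => RingQuot.mkAlgHom K (LRel K G) x

lemma lrel {a b : FreeAlgebra K (LGen V E)} (h : LRel K G a b) :
    RingQuot.mkAlgHom K (LRel K G) a = RingQuot.mkAlgHom K (LRel K G) b :=
  RingQuot.mkAlgHom_rel K h

variable {K G}

lemma vv (v : V) : vertElem K G v * vertElem K G v = vertElem K G v := by
  simp only [vertElem, ← map_mul]; exact lrel K G (LRel.vert_same v)

lemma vv_ne {u v : V} (h : u ≠ v) : vertElem K G u * vertElem K G v = 0 := by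
  simp only [vertElem, ← map_mul]
  simpa using lrel K G (LRel.vert_diff u v h)

lemma se (e : E) : vertElem K G (G.s e) * edgeElem K G e = edgeElem K G e := by
  simp only [vertElem, edgeElem, ← map_mul]; exact lrel K G (LRel.source_edge e)

lemma er (e : E) : edgeElem K G e * vertElem K G (G.r e) = edgeElem K G e := by
  simp only [vertElem, edgeElem, ← map_mul]; exact lrel K G (LRel.edge_range e)

lemma rg (e : E) : vertElem K G (G.r e) * ghostElem K G e = ghostElem K G e := by
  simp only [vertElem, ghostElem, ← map_mul]; exact lrel K G (LRel.range_ghost e)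

lemma gs (e : E) : ghostElem K G e * vertElem K G (G.s e) = ghostElem K G e := by
  simp only [vertElem, ghostElem, ← map_mul]; exact lrel K G (LRel.ghost_source e)

lemma ck1 (e : E) : ghostElem K G e * edgeElem K G e = vertElem K G (G.r e) := by
  simp only [vertElem, edgeElem, ghostElem, ← map_mul]; exact lrel K G (LRel.ck1_same e)

lemma ck1_ne {e f : E} (h : e ≠ f) : ghostElem K G e * edgeElem K G f = 0 := by
  simp only [edgeElem, ghostElem, ← map_mul]
  simpa using lrel K G (LRel.ck1_diff e f h)

/-! derived mismatch lemmas -/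

lemma vert_mul_edge_ne {x : V} {e : E} (h : x ≠ G.s e) :
    vertElem K G x * edgeElem K G e = 0 := by
  rw [← se e, ← mul_assoc, vv_ne h, zero_mul]

lemma edge_mul_vert_ne {x : V} {e : E} (h : G.r e ≠ x) :
    edgeElem K G e * vertElem K G x = 0 := by
  rw [← er e, mul_assoc, vv_ne h, mul_zero]

lemma vert_mul_ghost_ne {x : V} {e : E} (h : x ≠ G.r e) :
    vertElem K G x * ghostElem K G e = 0 := by
  rw [← rg e, ← mul_assoc, vv_ne h, zero_mul]

lemma ghost_mul_vert_ne {x : V} {e : E} (h : G.s e ≠ x) :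
    ghostElem K G e * vertElem K G x = 0 := by
  rw [← gs e, mul_assoc, vv_ne h, mul_zero]

@[simp] lemma pathElem_nil (w : V) :
    pathElem K G (GPath.nil (G := G) w) = vertElem K G w := rfl

@[simp] lemma pathElem_cons (e : E) {w : V} (p : G.GPath (G.r e) w) :
    pathElem K G (GPath.cons e p) = edgeElem K G e * pathElem K G p := rfl

@[simp] lemma pathStarElem_nil (w : V) :
    pathStarElem K G (GPath.nil (G := G) w) = vertElem K G w := rfl

@[simp] lemma pathStarElem_cons (e : E) {w : V} (p : G.GPath (G.r e) w) :
    pathStarElem K G (GPath.cons e p) = pathStarElem K G p * ghostElem K G e := rfl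

end LPAAux
namespace LPAAux

open DGraph LPA

variable {K : Type} [CommRing K] {V E : Type} {G : DGraph V E}

lemma vert_mul_path {u w : V} (p : G.GPath u w) :
    vertElem K G u * pathElem K G p = pathElem K G p := by
  induction p with
  | nil v => exact vv v
  | cons e p ih => rw [pathElem_cons, ← mul_assoc, se]

lemma vert_mul_path_ne {x u w : V} (h : x ≠ u) (p : G.GPath u w) :
    vertElem K G x * pathElem K G p = 0 := by
  rw [← vert_mul_path p, ← mul_assoc, vv_ne h, zero_mul]

lemma path_mul_vert {u w : V} (p : G.GPath u w) :
    pathElem K G p * vertElem K G w = pathElem K G p := by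
  induction p with
  | nil v => exact vv v
  | cons e p ih => rw [pathElem_cons, mul_assoc, ih]

lemma path_mul_vert_ne {x u w : V} (h : w ≠ x) (p : G.GPath u w) :
    pathElem K G p * vertElem K G x = 0 := by
  rw [← path_mul_vert p, mul_assoc, vv_ne h, mul_zero]

lemma star_mul_vert {u w : V} (p : G.GPath u w) :
    pathStarElem K G p * vertElem K G u = pathStarElem K G p := by
  induction p with
  | nil v => exact vv v
  | cons e p ih => rw [pathStarElem_cons, mul_assoc, gs]

lemma star_mul_vert_ne {x u w : V} (h : u ≠ x) (p : G.GPath u w) :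
    pathStarElem K G p * vertElem K G x = 0 := by
  rw [← star_mul_vert p, mul_assoc, vv_ne h, mul_zero]

lemma vert_mul_star {u w : V} (p : G.GPath u w) :
    vertElem K G w * pathStarElem K G p = pathStarElem K G p := by
  induction p with
  | nil v => exact vv v
  | cons e p ih => rw [pathStarElem_cons, ← mul_assoc, ih]

lemma vert_mul_star_ne {x u w : V} (h : x ≠ w) (p : G.GPath u w) :
    vertElem K G x * pathStarElem K G p = 0 := by
  rw [← vert_mul_star p, ← mul_assoc, vv_ne h, zero_mul]

lemma edge_mul_path_ne {a w : V} {e : E} (h : G.r e ≠ a) (p : G.GPath a w) :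
    edgeElem K G e * pathElem K G p = 0 := by
  rw [← vert_mul_path p, ← mul_assoc, edge_mul_vert_ne h, zero_mul]

lemma ghost_mul_path_ne {a w : V} {e : E} (h : G.s e ≠ a) (p : G.GPath a w) :
    ghostElem K G e * pathElem K G p = 0 := by
  rw [← vert_mul_path p, ← mul_assoc, ghost_mul_vert_ne h, zero_mul]

lemma star_mul_edge_ne {b w : V} {e : E} (h : b ≠ G.s e) (p : G.GPath b w) :
    pathStarElem K G p * edgeElem K G e = 0 := by
  rw [← star_mul_vert p, mul_assoc, vert_mul_edge_ne h, mul_zero]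

lemma star_mul_ghost_ne {b w : V} {e : E} (h : b ≠ G.r e) (p : G.GPath b w) :
    pathStarElem K G p * ghostElem K G e = 0 := by
  rw [← star_mul_vert p, mul_assoc, vert_mul_ghost_ne h, mul_zero]

lemma star_mul_path_self {u w : V} (p : G.GPath u w) :
    pathStarElem K G p * pathElem K G p = vertElem K G w := by
  induction p with
  | nil v => exact vv v
  | cons e p ih =>
    rw [pathStarElem_cons, pathElem_cons, mul_assoc, ← mul_assoc (ghostElem K G e),
      ck1, vert_mul_path, ih]

/-- Append an edge at the end of a path. -/
def snoc : ∀ {u v : V}, G.GPath u v → ∀ (e : E), G.s e = v → G.GPath u (G.r e)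
  | _, _, .nil _, e, h => h ▸ GPath.cons e (GPath.nil (G.r e))
  | _, _, .cons f p, e, h => GPath.cons f (snoc p e h)

lemma path_snoc {u v : V} (p : G.GPath u v) (e : E) (h : G.s e = v) :
    pathElem K G (snoc p e h) = pathElem K G p * edgeElem K G e := by
  induction p with
  | nil x =>
    subst h
    show pathElem K G (GPath.cons e (GPath.nil (G.r e))) = _
    rw [pathElem_cons, pathElem_nil, pathElem_nil, er, se]
  | cons f p ih =>
    show pathElem K G (GPath.cons f (snoc p e h)) = _
    rw [pathElem_cons, pathElem_cons, ih, mul_assoc]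

lemma star_snoc {u v : V} (p : G.GPath u v) (e : E) (h : G.s e = v) :
    pathStarElem K G (snoc p e h) = ghostElem K G e * pathStarElem K G p := by
  induction p with
  | nil x =>
    subst h
    show pathStarElem K G (GPath.cons e (GPath.nil (G.r e))) = _
    rw [pathStarElem_cons, pathStarElem_nil, pathStarElem_nil, rg, gs]
  | cons f p ih =>
    show pathStarElem K G (GPath.cons f (snoc p e h)) = _
    rw [pathStarElem_cons, pathStarElem_cons, ih, mul_assoc]

end LPAAux
namespace LPAAux

open DGraph LPA

variable {K : Type} [CommRing K] {V E : Type} {G : DGraph V E}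

/-- Trichotomy for `μ* γ`: either `γ` extends `μ`, or `μ` extends `γ`, or both
mixed products vanish. -/
lemma trichotomy : ∀ {u w : V} (μ : G.GPath u w) {u' w' : V} (γ : G.GPath u' w'),
    (∃ σ : G.GPath w w', pathElem K G μ * pathElem K G σ = pathElem K G γ ∧
      pathStarElem K G σ * pathStarElem K G μ = pathStarElem K G γ) ∨
    (∃ σ : G.GPath w' w, pathElem K G γ * pathElem K G σ = pathElem K G μ ∧
      pathStarElem K G σ * pathStarElem K G γ = pathStarElem K G μ) ∨
    (pathStarElem K G μ * pathElem K G γ = 0 ∧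
      pathStarElem K G γ * pathElem K G μ = 0) := by
  intro u w μ
  induction μ with
  | nil v =>
    intro u' w' γ
    by_cases h : v = u'
    · subst h
      exact Or.inl ⟨γ, vert_mul_path γ, star_mul_vert γ⟩
    · exact Or.inr (Or.inr ⟨vert_mul_path_ne h γ, star_mul_vert_ne (Ne.symm h) γ⟩)
  | cons e μ' ih =>
    intro u' w' γ
    cases γ with
    | nil =>
      by_cases h : u' = G.s e
      · subst h
        exact Or.inr (Or.inl ⟨GPath.cons e μ', vert_mul_path _, star_mul_vert _⟩)
      · refine Or.inr (Or.inr ⟨?_, ?_⟩)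
        · rw [pathStarElem_cons, pathElem_nil, mul_assoc,
            ghost_mul_vert_ne (fun hh => h hh.symm), mul_zero]
        · rw [pathStarElem_nil, pathElem_cons, ← mul_assoc,
            vert_mul_edge_ne h, zero_mul]
    | cons f γ' =>
      by_cases h : e = f
      · subst h
        rcases ih γ' with ⟨σ, h1, h2⟩ | ⟨σ, h1, h2⟩ | ⟨h1, h2⟩
        · refine Or.inl ⟨σ, ?_, ?_⟩
          · rw [pathElem_cons, pathElem_cons, mul_assoc, h1]
          · rw [pathStarElem_cons, pathStarElem_cons, ← mul_assoc, h2]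
        · refine Or.inr (Or.inl ⟨σ, ?_, ?_⟩)
          · rw [pathElem_cons, pathElem_cons, mul_assoc, h1]
          · rw [pathStarElem_cons, pathStarElem_cons, ← mul_assoc, h2]
        · refine Or.inr (Or.inr ⟨?_, ?_⟩)
          · rw [pathStarElem_cons, pathElem_cons, mul_assoc,
              ← mul_assoc (ghostElem K G e), ck1, vert_mul_path, h1]
          · rw [pathStarElem_cons, pathElem_cons, mul_assoc,
              ← mul_assoc (ghostElem K G e), ck1, vert_mul_path, h2]
      · refine Or.inr (Or.inr ⟨?_, ?_⟩)
        · rw [pathStarElem_cons, pathElem_cons, mul_assoc,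
            ← mul_assoc (ghostElem K G e), ck1_ne h, zero_mul, mul_zero]
        · rw [pathStarElem_cons, pathElem_cons, mul_assoc,
            ← mul_assoc (ghostElem K G f), ck1_ne (Ne.symm h), zero_mul, mul_zero]

lemma star_mul_path_of_ext {u w u' w' : V} {μ : G.GPath u w} {γ : G.GPath u' w'}
    {σ : G.GPath w w'} (h1 : pathElem K G μ * pathElem K G σ = pathElem K G γ) :
    pathStarElem K G μ * pathElem K G γ = pathElem K G σ := by
  rw [← h1, ← mul_assoc, star_mul_path_self, vert_mul_path]

lemma star_mul_path_of_ext' {u w u' w' : V} {μ : G.GPath u w} {γ : G.GPath u' w'}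
    {σ : G.GPath w w'} (h2 : pathStarElem K G σ * pathStarElem K G μ = pathStarElem K G γ) :
    pathStarElem K G γ * pathElem K G μ = pathStarElem K G σ := by
  rw [← h2, mul_assoc, star_mul_path_self, star_mul_vert]

end LPAAux
namespace LPAAux

open DGraph LPA

variable (K : Type) [CommRing K] {V E : Type} (G : DGraph V E)

/-- The set of monomials `λ μ*` with common range in `H`. -/
def BSet (H : Set V) : Set (LPA K G) :=
  {x | ∃ (a b w : V) (l : G.GPath a w) (m : G.GPath b w),
    w ∈ H ∧ x = pathElem K G l * pathStarElem K G m}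

/-- The `K`-span of the monomials `λ μ*` with common range in `H`. -/
def MSet (H : Set V) : Submodule K (LPA K G) := Submodule.span K (BSet K G H)

variable {K G}

lemma basic_mem_MSet {H : Set V} {a b w : V} (l : G.GPath a w) (m : G.GPath b w)
    (hw : w ∈ H) : pathElem K G l * pathStarElem K G m ∈ MSet K G H :=
  Submodule.subset_span ⟨a, b, w, l, m, hw, rfl⟩

lemma mul_span_closed {S : Set (LPA K G)} {a : LPA K G}
    (ha : ∀ x ∈ S, a * x ∈ Submodule.span K S) :
    ∀ {y : LPA K G}, y ∈ Submodule.span K S → a * y ∈ Submodule.span K S := by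
  intro y hy
  induction hy using Submodule.span_induction with
  | mem y hy => exact ha y hy
  | zero => rw [mul_zero]; exact zero_mem _
  | add y z _ _ h1 h2 => rw [mul_add]; exact add_mem h1 h2
  | smul k y _ h => rw [mul_smul_comm]; exact Submodule.smul_mem _ _ h

lemma span_mul_closed {S : Set (LPA K G)} {a : LPA K G}
    (ha : ∀ x ∈ S, x * a ∈ Submodule.span K S) :
    ∀ {y : LPA K G}, y ∈ Submodule.span K S → y * a ∈ Submodule.span K S := by
  intro y hy
  induction hy using Submodule.span_induction with
  | mem y hy => exact ha y hy
  | zero => rw [zero_mul]; exact zero_mem _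
  | add y z _ _ h1 h2 => rw [add_mul]; exact add_mem h1 h2
  | smul k y _ h => rw [smul_mul_assoc]; exact Submodule.smul_mem _ _ h

lemma mk_mul_basic_mem {H : Set V} (hH : G.Hereditary H)
    (bb : FreeAlgebra K (LGen V E)) :
    ∀ x ∈ BSet K G H, (RingQuot.mkAlgHom K (LRel K G)) bb * x ∈ MSet K G H := by
  induction bb with
  | grade0 k =>
    intro x hx
    rw [AlgHom.commutes, ← Algebra.smul_def]
    exact Submodule.smul_mem _ _ (Submodule.subset_span hx)
  | add a b iha ihb =>
    intro x hx
    rw [map_add, add_mul]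
    exact add_mem (iha x hx) (ihb x hx)
  | mul a b iha ihb =>
    intro x hx
    rw [map_mul, mul_assoc]
    exact mul_span_closed iha (ihb x hx)
  | grade1 g =>
    rintro x ⟨a, b, w, l, m, hw, rfl⟩
    match g with
    | LGen.vert u =>
      show vertElem K G u * _ ∈ _
      by_cases h : u = a
      · subst h
        rw [← mul_assoc, vert_mul_path]
        exact basic_mem_MSet l m hw
      · rw [← mul_assoc, vert_mul_path_ne h, zero_mul]
        exact zero_mem _
    | LGen.edge e =>
      show edgeElem K G e * _ ∈ _
      by_cases h : G.r e = a
      · subst h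
        rw [← mul_assoc]
        exact basic_mem_MSet (GPath.cons e l) m hw
      · rw [← mul_assoc, edge_mul_path_ne h, zero_mul]
        exact zero_mem _
    | LGen.ghost e =>
      show ghostElem K G e * _ ∈ _
      cases l with
      | nil =>
        by_cases h : a = G.s e
        · subst h
          rw [pathElem_nil, ← mul_assoc, gs, ← star_snoc m e rfl]
          have : pathStarElem K G (snoc m e rfl) =
              pathElem K G (GPath.nil (G := G) (G.r e)) * pathStarElem K G (snoc m e rfl) := by
            rw [pathElem_nil, vert_mul_star]
          rw [this]
          exact basic_mem_MSet _ _ (hH ⟨GPath.cons e (GPath.nil (G.r e))⟩ hw)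
        · rw [pathElem_nil, ← mul_assoc, ghost_mul_vert_ne (fun hh => h hh.symm), zero_mul]
          exact zero_mem _
      | cons f l' =>
        by_cases h : e = f
        · subst h
          rw [pathElem_cons, ← mul_assoc, ← mul_assoc, ck1, vert_mul_path]
          exact basic_mem_MSet l' m hw
        · rw [pathElem_cons, ← mul_assoc, ← mul_assoc, ck1_ne h, zero_mul, zero_mul]
          exact zero_mem _

lemma basic_mul_mk_mem {H : Set V} (hH : G.Hereditary H)
    (bb : FreeAlgebra K (LGen V E)) :
    ∀ x ∈ BSet K G H, x * (RingQuot.mkAlgHom K (LRel K G)) bb ∈ MSet K G H := by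
  induction bb with
  | grade0 k =>
    intro x hx
    rw [AlgHom.commutes, ← Algebra.commutes, ← Algebra.smul_def]
    exact Submodule.smul_mem _ _ (Submodule.subset_span hx)
  | add a b iha ihb =>
    intro x hx
    rw [map_add, mul_add]
    exact add_mem (iha x hx) (ihb x hx)
  | mul a b iha ihb =>
    intro x hx
    rw [map_mul, ← mul_assoc]
    exact span_mul_closed ihb (iha x hx)
  | grade1 g =>
    rintro x ⟨a, b, w, l, m, hw, rfl⟩
    match g with
    | LGen.vert u =>
      show _ * vertElem K G u ∈ _
      by_cases h : b = u
      · subst h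
        rw [mul_assoc, star_mul_vert]
        exact basic_mem_MSet l m hw
      · rw [mul_assoc, star_mul_vert_ne h, mul_zero]
        exact zero_mem _
    | LGen.ghost e =>
      show _ * ghostElem K G e ∈ _
      by_cases h : G.r e = b
      · subst h
        rw [mul_assoc, ← pathStarElem_cons e m]
        exact basic_mem_MSet l (GPath.cons e m) hw
      · rw [mul_assoc, star_mul_ghost_ne (fun hh => h hh.symm), mul_zero]
        exact zero_mem _
    | LGen.edge e =>
      show _ * edgeElem K G e ∈ _
      cases m with
      | nil =>
        by_cases h : b = G.s e
        · subst h
          rw [pathStarElem_nil, mul_assoc, se, ← path_snoc l e rfl]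
          have : pathElem K G (snoc l e rfl) =
              pathElem K G (snoc l e rfl) * pathStarElem K G (GPath.nil (G := G) (G.r e)) := by
            rw [pathStarElem_nil, path_mul_vert]
          rw [this]
          exact basic_mem_MSet _ _ (hH ⟨GPath.cons e (GPath.nil (G.r e))⟩ hw)
        · rw [pathStarElem_nil, mul_assoc, vert_mul_edge_ne h, mul_zero]
          exact zero_mem _
      | cons f m' =>
        by_cases h : f = e
        · subst h
          rw [pathStarElem_cons, mul_assoc, mul_assoc, ck1, star_mul_vert]
          exact basic_mem_MSet l m' hw
        · rw [pathStarElem_cons, mul_assoc, mul_assoc, ck1_ne h, mul_zero, mul_zero]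
          exact zero_mem _

lemma mul_MSet_mem {H : Set V} (hH : G.Hereditary H) (a : LPA K G) {y : LPA K G}
    (hy : y ∈ MSet K G H) : a * y ∈ MSet K G H := by
  obtain ⟨bb, rfl⟩ := RingQuot.mkAlgHom_surjective K (LRel K G) a
  induction hy using Submodule.span_induction with
  | mem y hy => exact mk_mul_basic_mem hH bb y hy
  | zero => rw [mul_zero]; exact zero_mem _
  | add y z _ _ h1 h2 => rw [mul_add]; exact add_mem h1 h2
  | smul k y _ h => rw [mul_smul_comm]; exact Submodule.smul_mem _ _ h

lemma MSet_mul_mem {H : Set V} (hH : G.Hereditary H) {y : LPA K G}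
    (hy : y ∈ MSet K G H) (a : LPA K G) : y * a ∈ MSet K G H := by
  obtain ⟨bb, rfl⟩ := RingQuot.mkAlgHom_surjective K (LRel K G) a
  induction hy using Submodule.span_induction with
  | mem y hy => exact basic_mul_mk_mem hH bb y hy
  | zero => rw [zero_mul]; exact zero_mem _
  | add y z _ _ h1 h2 => rw [add_mul]; exact add_mem h1 h2
  | smul k y _ h => rw [smul_mul_assoc]; exact Submodule.smul_mem _ _ h

/-- The spanning lemma: the ideal generated by a hereditary `H` is contained in
the span of the monomials `λ μ*` with range in `H`. -/
lemma vertIdeal_le_MSet {H : Set V} (hH : G.Hereditary H) {x : LPA K G}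
    (hx : x ∈ vertIdeal K G H) : x ∈ MSet K G H := by
  rw [vertIdeal, TwoSidedIdeal.mem_span_iff] at hx
  have key := hx (TwoSidedIdeal.mk' (MSet K G H : Set (LPA K G))
    (zero_mem _) (fun h1 h2 => add_mem h1 h2) (fun h => neg_mem h)
    (fun {c y} hy => mul_MSet_mem hH c hy) (fun {y c} hy => MSet_mul_mem hH hy c)) ?_
  · rwa [TwoSidedIdeal.mem_mk'] at key
  · rintro _ ⟨v, hv, rfl⟩
    rw [SetLike.mem_coe, TwoSidedIdeal.mem_mk', SetLike.mem_coe]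
    have : vertElem K G v = pathElem K G (GPath.nil (G := G) v) *
        pathStarElem K G (GPath.nil (G := G) v) := by
      rw [pathElem_nil, pathStarElem_nil, vv]
    rw [this]
    exact basic_mem_MSet _ _ hv

end LPAAux
namespace LPAAux

open DGraph LPA

variable {K : Type} [CommRing K] {V E : Type} {G : DGraph V E}

lemma basic_mul_u {a b w : V} (l : G.GPath a w) (m : G.GPath b w) :
    (pathElem K G l * pathStarElem K G m) * (pathElem K G m * pathStarElem K G m) =
      pathElem K G l * pathStarElem K G m := by
  rw [mul_assoc, ← mul_assoc (pathStarElem K G m), star_mul_path_self, vert_mul_star]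

lemma uu_comm_eq {b w c w' : V} (μ : G.GPath b w) (ν : G.GPath c w') :
    (pathElem K G μ * pathStarElem K G μ) * (pathElem K G ν * pathStarElem K G ν) =
      (pathElem K G ν * pathStarElem K G ν) * (pathElem K G μ * pathStarElem K G μ) := by
  rcases trichotomy (K := K) μ ν with ⟨σ, h1, h2⟩ | ⟨σ, h1, h2⟩ | ⟨h1, h2⟩
  · rw [mul_assoc, ← mul_assoc (pathStarElem K G μ), star_mul_path_of_ext h1,
      ← mul_assoc, h1, mul_assoc, ← mul_assoc (pathStarElem K G ν),
      star_mul_path_of_ext' h2, h2]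
  · rw [mul_assoc, ← mul_assoc (pathStarElem K G μ), star_mul_path_of_ext' h2, h2,
      mul_assoc, ← mul_assoc (pathStarElem K G ν), star_mul_path_of_ext h1,
      ← mul_assoc, h1]
  · rw [mul_assoc, ← mul_assoc (pathStarElem K G μ), h1, zero_mul, mul_zero,
      mul_assoc, ← mul_assoc (pathStarElem K G ν), h2, zero_mul, mul_zero]

lemma uu_comm {b w c w' : V} (μ : G.GPath b w) (ν : G.GPath c w') :
    Commute (pathElem K G μ * pathStarElem K G μ) (pathElem K G ν * pathStarElem K G ν) :=
  (commute_iff_eq _ _).mpr (uu_comm_eq μ ν)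

/-- A common right local unit for a finite set of basic monomials. -/
lemma exists_unit_for_finset {H : Set V} (hH : G.Hereditary H) (s : Finset (LPA K G))
    (hs : ∀ y ∈ s, y ∈ BSet K G H) :
    ∃ U ∈ MSet K G H, (∀ y ∈ s, y * U = y) ∧
      ∀ (b w : V) (ν : G.GPath b w), Commute (pathElem K G ν * pathStarElem K G ν) U := by
  classical
  induction s using Finset.induction with
  | empty =>
    refine ⟨0, zero_mem _, ?_, ?_⟩
    · intro y hy; simp at hy
    · intro b w ν; exact Commute.zero_right _
  | @insert a s ha ih =>
    obtain ⟨U, hU, hyU, hcomm⟩ := ih (fun y hy => hs y (Finset.mem_insert_of_mem hy))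
    obtain ⟨p, q, w, l, m, hw, hadef⟩ := hs a (Finset.mem_insert_self a s)
    refine ⟨U + pathElem K G m * pathStarElem K G m
        - U * (pathElem K G m * pathStarElem K G m), ?_, ?_, ?_⟩
    · exact sub_mem (add_mem hU (basic_mem_MSet m m hw))
        (MSet_mul_mem hH hU (pathElem K G m * pathStarElem K G m))
    · intro y hy
      rcases Finset.mem_insert.mp hy with rfl | hy
      · subst hadef
        have hcm : U * (pathElem K G m * pathStarElem K G m) =
            (pathElem K G m * pathStarElem K G m) * U :=
          ((commute_iff_eq _ _).mp (hcomm q w m)).symm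
        have h2 : (pathElem K G l * pathStarElem K G m) *
            ((pathElem K G m * pathStarElem K G m) * U) =
            (pathElem K G l * pathStarElem K G m) * U := by
          rw [← mul_assoc, basic_mul_u]
        rw [mul_sub, mul_add, hcm, h2, basic_mul_u]
        abel
      · have h2 : y * (U * (pathElem K G m * pathStarElem K G m)) =
            y * (pathElem K G m * pathStarElem K G m) := by
          rw [← mul_assoc, hyU y hy]
        rw [mul_sub, mul_add, h2, hyU y hy]
        abel
    · intro b' w' ν
      exact ((hcomm b' w' ν).add_right (uu_comm ν m)).sub_right
        ((hcomm b' w' ν).mul_right (uu_comm ν m))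

/-- Every element of `MSet H` has a right local unit inside `MSet H`. -/
lemma exists_unit {H : Set V} (hH : G.Hereditary H) {x : LPA K G}
    (hx : x ∈ MSet K G H) : ∃ U ∈ MSet K G H, x * U = x := by
  obtain ⟨c, hsupp, rfl⟩ := Submodule.mem_span_set.mp hx
  obtain ⟨U, hU, hyU, -⟩ := exists_unit_for_finset hH c.support (fun y hy => hsupp hy)
  refine ⟨U, hU, ?_⟩
  rw [Finsupp.sum, Finset.sum_mul]
  exact Finset.sum_congr rfl fun y hy => by rw [smul_mul_assoc, hyU y hy]

/-- Product of the spans for disjoint hereditary sets vanishes. -/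
lemma basic_mul_MSet_zero {H H' : Set V} (hH : G.Hereditary H) (hH' : G.Hereditary H')
    (hd : ∀ v, v ∈ H → v ∈ H' → False) {p q w : V} (l : G.GPath p w) (m : G.GPath q w)
    (hw : w ∈ H) {y : LPA K G} (hy : y ∈ MSet K G H') :
    (pathElem K G l * pathStarElem K G m) * y = 0 := by
  induction hy using Submodule.span_induction with
  | zero => rw [mul_zero]
  | add a b _ _ h1 h2 => rw [mul_add, h1, h2, add_zero]
  | smul k a _ h => rw [mul_smul_comm, h, smul_zero]
  | mem b hbmem =>
    obtain ⟨p', q', w', l', m', hw', rfl⟩ := hbmem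
    rcases trichotomy (K := K) m l' with ⟨σ, h1, h2⟩ | ⟨σ, h1, h2⟩ | ⟨h1, h2⟩
    · exact absurd (hH ⟨σ⟩ hw) (fun hmem => hd w' hmem hw')
    · exact absurd (hH' ⟨σ⟩ hw') (hd w hw)
    · rw [mul_assoc, ← mul_assoc (pathStarElem K G m), h1, zero_mul, mul_zero]

lemma MSet_mul_MSet {H H' : Set V} (hH : G.Hereditary H) (hH' : G.Hereditary H')
    (hd : ∀ v, v ∈ H → v ∈ H' → False) {x y : LPA K G}
    (hx : x ∈ MSet K G H) (hy : y ∈ MSet K G H') : x * y = 0 := by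
  induction hx using Submodule.span_induction with
  | zero => rw [zero_mul]
  | add a b _ _ h1 h2 => rw [add_mul, h1, h2, add_zero]
  | smul k a _ h => rw [smul_mul_assoc, h, smul_zero]
  | mem a hamem =>
    obtain ⟨p, q, w, l, m, hw, rfl⟩ := hamem
    exact basic_mul_MSet_zero hH hH' hd l m hw hy

end LPAAux
/-- for a pairwise disjoint family of hereditary sets `Hᵢ`, the
ideal generated by their union is the internal direct sum of the ideals
`I(Hᵢ)`. -/
theorem vertIdeal_iUnion_eq_directSum (K : Type) [Field K] {V E : Type}
    (G : DGraph V E) {Λ : Type} (H : Λ → Set V)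
    (hher : ∀ i, G.Hereditary (H i))
    (hdis : ∀ i j, i ≠ j → H i ∩ H j = ∅) :
    LPA.vertIdeal K G (⋃ i, H i) = (⨆ i, LPA.vertIdeal K G (H i)) ∧
    iSupIndep (fun i => LPA.vertIdeal K G (H i)) := by
  classical
  constructor
  · apply le_antisymm
    · intro x hx
      rw [LPA.vertIdeal, TwoSidedIdeal.mem_span_iff] at hx
      refine hx _ ?_
      rintro _ ⟨v, hv, rfl⟩
      rw [Set.mem_iUnion] at hv
      obtain ⟨i, hi⟩ := hv
      exact SetLike.mem_coe.mpr
        ((le_iSup (fun i => LPA.vertIdeal K G (H i)) i)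
          (TwoSidedIdeal.subset_span ⟨v, hi, rfl⟩))
    · exact iSup_le fun i =>
        TwoSidedIdeal.span_mono (Set.image_mono (Set.subset_iUnion H i))
  · intro i
    rw [disjoint_iff_inf_le]
    intro x hx
    rw [TwoSidedIdeal.mem_inf] at hx
    obtain ⟨hx1, hx2⟩ := hx
    set H' : Set V := ⋃ (j : Λ) (_ : j ≠ i), H j with hH'def
    have hH' : G.Hereditary H' := by
      intro u v huv hu
      simp only [hH'def, Set.mem_iUnion] at hu ⊢
      obtain ⟨j, hj, h⟩ := hu
      exact ⟨j, hj, hher j huv h⟩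
    have hle : (⨆ j, ⨆ (_ : j ≠ i), LPA.vertIdeal K G (H j)) ≤ LPA.vertIdeal K G H' :=
      iSup_le fun j => iSup_le fun hj =>
        TwoSidedIdeal.span_mono (Set.image_mono (fun v hv =>
          Set.mem_iUnion.mpr ⟨j, Set.mem_iUnion.mpr ⟨hj, hv⟩⟩))
    have hx2' : x ∈ LPAAux.MSet K G H' := LPAAux.vertIdeal_le_MSet hH' (hle hx2)
    have hx1' : x ∈ LPAAux.MSet K G (H i) := LPAAux.vertIdeal_le_MSet (hher i) hx1
    obtain ⟨U, hU, hxU⟩ := LPAAux.exists_unit (hher i) hx1'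
    have hz : x * U = 0 := by
      refine LPAAux.MSet_mul_MSet hH' (hher i) ?_ hx2' hU
      intro v hv hvi
      simp only [hH'def, Set.mem_iUnion] at hv
      obtain ⟨j, hj, hvj⟩ := hv
      exact Set.eq_empty_iff_forall_notMem.mp (hdis j i hj) v ⟨hvj, hvi⟩
    rw [hxU] at hz
    exact (TwoSidedIdeal.mem_bot _).mpr hz
end

section
/- Let c be an extreme cycle in a graph E. Then the set \tilde{c}^0 of all vertices lying on extreme cycles connected to c equals the tree T(c^0) of c; in particular \tilde{c}^0 is a hereditary subset of E^0. -/
/-- The set `\tilde{c}^0` of vertices lying on extreme cycles connected to the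
cycle `c`. -/
def DGraph.tildeVerts {V E : Type} (G : DGraph V E) {v : V} (c : G.GPath v v) : Set V :=
  {w : V | ∃ (u : V) (d : G.GPath u u), G.IsExtreme d ∧
    (G.Tree {x : V | x ∈ c.vertices} ∩ {x : V | x ∈ d.vertices}).Nonempty ∧
    w ∈ d.vertices}

/-!
Every extreme cycle meeting `T(c⁰)` lies in it, since its vertices are reachable from the
meeting point. Conversely, for `w ∈ T(c⁰)` extremality of `c` lets `w` reach back to `c`, so
the closed path `w ⟶ v ⟶(c) v ⟶ w` contains a cycle `d` through `w`. As `w` and the base `v`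
of `c` reach each other, `d` inherits from `c` both an exit and the property that everything
reachable from it returns to it.
-/

namespace DGraph

variable {V E : Type} {G : DGraph V E}

namespace GPath

def comp : ∀ {a b c : V}, G.GPath a b → G.GPath b c → G.GPath a c
  | _, _, _, .nil _, q => q
  | _, _, _, .cons e p, q => .cons e (p.comp q)

@[simp]
lemma length_comp : ∀ {a b c : V} (p : G.GPath a b) (q : G.GPath b c),
    (p.comp q).length = p.length + q.length
  | _, _, _, .nil _, q => by simp [comp, length]
  | _, _, _, .cons e p, q => by simp [comp, length, length_comp p q]; omega

lemma start_mem_vertices : ∀ {a b : V} (p : G.GPath a b), a ∈ p.vertices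
  | _, _, .nil _ => List.mem_singleton_self _
  | _, _, .cons _ _ => List.mem_cons_self

lemma vertices_eq : ∀ {a b : V} (p : G.GPath a b),
    p.vertices = p.edges.map G.s ++ [b]
  | _, _, .nil _ => rfl
  | _, _, .cons e p => by simp [vertices, edges, vertices_eq p]

lemma mem_vertices_of_mem_sources {a b x : V} (p : G.GPath a b)
    (hx : x ∈ p.edges.map G.s) : x ∈ p.vertices := by
  rw [vertices_eq]
  exact List.mem_append_left _ hx

lemma mem_vertices_iff_mem_sources_of_length_pos : ∀ {a : V} (p : G.GPath a a),
    0 < p.length → ∀ {x : V}, x ∈ p.vertices ↔ x ∈ p.edges.map G.s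
  | _, .cons e p, _, x => by
      simp only [vertices, edges, List.map_cons, List.mem_cons, vertices_eq p,
        List.mem_append]
      tauto

lemma r_mem_vertices : ∀ {a b : V} (p : G.GPath a b) {f : E}, f ∈ p.edges →
    G.r f ∈ p.vertices
  | _, _, .cons e p, f, h => by
      rcases List.mem_cons.1 h with rfl | h
      · exact List.mem_cons_of_mem _ (start_mem_vertices p)
      · exact List.mem_cons_of_mem _ (r_mem_vertices p h)

lemma exists_comp_eq_of_mem_sources : ∀ {a b x : V} (p : G.GPath a b),
    x ∈ p.edges.map G.s → ∃ (q : G.GPath a x) (r : G.GPath x b), q.comp r = p ∧ 0 < r.length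
  | _, _, _, .nil _, h => absurd h List.not_mem_nil
  | _, _, x, .cons e p, h => by
      rcases List.mem_cons.1 h with rfl | h
      · exact ⟨.nil _, .cons e p, rfl, Nat.succ_pos _⟩
      · obtain ⟨q, r, rfl, hr⟩ := exists_comp_eq_of_mem_sources p h
        exact ⟨.cons e q, r, rfl, hr⟩

lemma exists_loop_of_not_nodup : ∀ {a b : V} (p : G.GPath a b), ¬(p.edges.map G.s).Nodup →
    ∃ (x : V) (q : G.GPath a x) (r : G.GPath x x) (t : G.GPath x b),
      q.comp (r.comp t) = p ∧ 0 < r.length ∧ 0 < t.length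
  | _, _, .nil _, h => absurd List.nodup_nil h
  | _, _, .cons e p, h => by
      rw [edges, List.map_cons, List.nodup_cons, not_and_or, not_not] at h
      rcases h with h | h
      · obtain ⟨q, r, rfl, hr⟩ := exists_comp_eq_of_mem_sources p h
        exact ⟨_, .nil _, .cons e q, r, rfl, Nat.succ_pos _, hr⟩
      · obtain ⟨x, q, r, t, rfl, hr, ht⟩ := exists_loop_of_not_nodup p h
        exact ⟨x, .cons e q, r, t, rfl, hr, ht⟩

lemma exists_isCycle_of_length_pos {a : V} (p : G.GPath a a) (hp : 0 < p.length) :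
    ∃ d : G.GPath a a, G.IsCycle d := by
  by_cases hn : (p.edges.map G.s).Nodup
  · exact ⟨p, hp, hn⟩
  · obtain ⟨x, q, r, t, hqrt, hr, ht⟩ := exists_loop_of_not_nodup p hn
    exact exists_isCycle_of_length_pos (q.comp t) (by simp only [length_comp]; omega)
termination_by p.length
decreasing_by rw [← hqrt]; simp only [length_comp]; omega

end GPath

lemma Reach.refl (a : V) : G.Reach a a := ⟨.nil a⟩

lemma Reach.trans {a b c : V} : G.Reach a b → G.Reach b c → G.Reach a c
  | ⟨p⟩, ⟨q⟩ => ⟨p.comp q⟩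

namespace GPath

lemma reach_of_mem_vertices : ∀ {a b x : V} (p : G.GPath a b), x ∈ p.vertices → G.Reach a x
  | _, _, _, .nil _, h => List.mem_singleton.1 h ▸ Reach.refl _
  | _, _, _, .cons e p, h => by
      rcases List.mem_cons.1 h with rfl | h
      · exact Reach.refl _
      · exact Reach.trans ⟨.cons e (.nil _)⟩ (reach_of_mem_vertices p h)

lemma reach_end_of_mem_vertices : ∀ {a b x : V} (p : G.GPath a b), x ∈ p.vertices → G.Reach x b
  | _, _, _, .nil _, h => List.mem_singleton.1 h ▸ Reach.refl _
  | _, _, _, .cons e p, h => by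
      rcases List.mem_cons.1 h with rfl | h
      · exact ⟨.cons e p⟩
      · exact reach_end_of_mem_vertices p h

lemma mem_vertices_of_not_hasExit {u : V} {d : G.GPath u u} (hd : 0 < d.length)
    (hne : ¬G.HasExit d) {x y : V} (hx : x ∈ d.vertices) : G.Reach x y → y ∈ d.vertices := by
  rintro ⟨p⟩
  induction p with
  | nil => exact hx
  | cons f p ih =>
      refine ih (r_mem_vertices d ?_)
      by_contra hf
      exact hne ⟨f, (mem_vertices_iff_mem_sources_of_length_pos d hd).1 hx, hf⟩

end GPath

open GPath

lemma tree_vertices {a b : V} (p : G.GPath a b) :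
    G.Tree {x | x ∈ p.vertices} = {w | G.Reach a w} :=
  Set.ext fun _ => ⟨fun ⟨_, hx, hxw⟩ => (reach_of_mem_vertices p hx).trans hxw,
    fun h => ⟨a, start_mem_vertices p, h⟩⟩

lemma hereditary_tree (X : Set V) : G.Hereditary (G.Tree X) :=
  fun _ _ huv ⟨x, hx, hxu⟩ => ⟨x, hx, hxu.trans huv⟩

/-- Without an exit, `d` would absorb everything reachable from it, in particular the exit
`e` of `p` together with the edge of `p` sharing its source; two edges of `d` with one
source contradict `d` being a cycle. -/
lemma IsCycle.hasExit_of_reach {u a b : V} {d : G.GPath u u} (hd : G.IsCycle d)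
    {p : G.GPath a b} (hp : G.HasExit p) (hua : G.Reach u a) : G.HasExit d := by
  by_contra hne
  obtain ⟨e, hep, he⟩ := hp
  obtain ⟨e', he'p, hse⟩ := List.mem_map.1 hep
  have hsd : G.s e ∈ d.edges.map G.s := (mem_vertices_iff_mem_sources_of_length_pos d hd.1).1 <|
    mem_vertices_of_not_hasExit hd.1 hne (start_mem_vertices d)
      (hua.trans (reach_of_mem_vertices p (mem_vertices_of_mem_sources p hep)))
  have hed : e ∈ d.edges := by_contra fun h => hne ⟨e, hsd, h⟩
  have he'd : e' ∈ d.edges := by_contra fun h => hne ⟨e', hse ▸ hsd, h⟩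
  exact he (List.inj_on_of_nodup_map hd.2 hed he'd hse.symm ▸ he'p)

lemma IsExtreme.reach_of_reach {v w : V} {c : G.GPath v v} (hc : G.IsExtreme c)
    (hw : G.Reach v w) : G.Reach w v := by
  obtain ⟨z, hz, hwz⟩ := hc.2.2 v (start_mem_vertices c) w hw
  exact hwz.trans (reach_end_of_mem_vertices c hz)

lemma IsExtreme.exists_isExtreme_of_reach {v w : V} {c : G.GPath v v} (hc : G.IsExtreme c)
    (hw : G.Reach v w) : ∃ d : G.GPath w w, G.IsExtreme d := by
  obtain ⟨p⟩ := hc.reach_of_reach hw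
  obtain ⟨q⟩ := hw
  obtain ⟨d, hd⟩ := exists_isCycle_of_length_pos (p.comp (c.comp q))
    (by have := hc.1.1; simp only [length_comp]; omega)
  refine ⟨d, hd, hd.hasExit_of_reach hc.2.1 ⟨p⟩, fun x hx y hxy => ⟨w, start_mem_vertices d, ?_⟩⟩
  have hvy : G.Reach v y := Reach.trans ⟨q⟩ ((reach_of_mem_vertices d hx).trans hxy)
  exact (hc.reach_of_reach hvy).trans ⟨q⟩

lemma tildeVerts_subset_tree {v : V} (c : G.GPath v v) :
    G.tildeVerts c ⊆ G.Tree {x | x ∈ c.vertices} := by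
  rintro w ⟨u, d, -, ⟨x, ⟨y, hy, hyx⟩, hxd⟩, hwd⟩
  exact ⟨y, hy, hyx.trans ((reach_end_of_mem_vertices d hxd).trans
    (reach_of_mem_vertices d hwd))⟩

end DGraph

/-- for an extreme cycle `c`, the set `\tilde{c}^0` equals the
tree `T(c^0)`; in particular it is hereditary. -/
theorem tildeVerts_eq_tree {V E : Type} (G : DGraph V E) {v : V}
    (c : G.GPath v v) (hc : G.IsExtreme c) :
    G.tildeVerts c = G.Tree {x : V | x ∈ c.vertices} ∧
    G.Hereditary (G.tildeVerts c) := by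
  have htree : G.tildeVerts c = G.Tree {x : V | x ∈ c.vertices} := by
    refine (DGraph.tildeVerts_subset_tree c).antisymm fun w hw => ?_
    have hvw : G.Reach v w := by rwa [DGraph.tree_vertices] at hw
    obtain ⟨d, hd⟩ := hc.exists_isExtreme_of_reach hvw
    exact ⟨w, d, hd, ⟨w, hw, d.start_mem_vertices⟩, d.start_mem_vertices⟩
  exact ⟨htree, htree ▸ DGraph.hereditary_tree _⟩
end
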